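/- Let T be a weighted tree, ρ > 0, and let x be a vertex whose neighbors are u_1, …, u_h, ordered so that w(x,u_k) + b_time(u_k, B(u_k,x)) is nonincreasing in k. Then contacting the neighbors in the order u_1, u_2, …, u_h minimizes the broadcast time of x, and b_time(x, T) = max over 1 ≤ k ≤ h of (k·ρ + w(x,u_k) + b_time(u_k, B(u_k,x))). -/

import Mathlib

/-!
Common definitions for the postal-model broadcasting problem on weighted trees.
-/

open SimpleGraph

namespace Postal

attribute [local instance] Classical.propDecidable

variable {V : Type*} [Fintype V] [DecidableEq V] (G : SimpleGraph V)

/-- The unique path (as a walk) between two vertices of a tree. -/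
noncomputable def tPath (hG : G.IsTree) (u v : V) : G.Walk u v :=
  (hG.existsUnique_path u v).exists.choose

/-- `z` lies in the open branch `O(x,y)`: the component of `T - x` containing `y`. -/
def inO (x y z : V) : Prop := ∃ p : G.Walk y z, x ∉ p.support

/-- The open branch `O(x,y)`. -/
def Obr (x y : V) : Set V := {z | inO G x y z}

/-- The closed branch `B(x,y) = T - O(x,y)` (it contains `x`). -/
def Bbr (x y : V) : Set V := {z | ¬ inO G x y z}

/-- The parent of `z` with respect to the root `u`: the penultimate vertex on the
unique `u`-to-`z` path. -/
noncomputable def parent (hG : G.IsTree) (u z : V) : V :=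
  (tPath G hG u z).getVert ((tPath G hG u z).length - 1)

/-- The receive time of `z` under schedule `σ` when `u` originates the message:
along the unique `u`-to-`z` path, each vertex is contacted in its slot `σ`,
contributing `σ·ρ` connection time plus the edge weight. -/
noncomputable def recvTime (hG : G.IsTree) (w : V → V → ℝ) (ρ : ℝ) (σ : V → ℕ) (u z : V) : ℝ :=
  ((tPath G hG u z).darts.map (fun d => (σ d.toProd.2 : ℝ) * ρ + w d.toProd.1 d.toProd.2)).sum

/-- A schedule `σ` is valid for source `u` broadcasting over the vertex set `S`:
every non-source vertex gets a slot `≥ 1`, and distinct vertices with the same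
parent get distinct slots (a sender contacts its neighbors sequentially). -/
def Valid (hG : G.IsTree) (σ : V → ℕ) (u : V) (S : Set V) : Prop :=
  (∀ z ∈ S, z ≠ u → 1 ≤ σ z) ∧
  (∀ z₁ ∈ S, ∀ z₂ ∈ S, z₁ ≠ u → z₂ ≠ u → z₁ ≠ z₂ →
    parent G hG u z₁ = parent G hG u z₂ → σ z₁ ≠ σ z₂)

/-- The minimum broadcast time for `u` to broadcast a message over the subtree
induced by `S` under the postal model with latency `ρ`. -/
noncomputable def bTime (hG : G.IsTree) (w : V → V → ℝ) (ρ : ℝ) (u : V) (S : Set V) : ℝ :=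
  sInf {m | ∃ σ, Valid G hG σ u S ∧ m = sSup ((recvTime G hG w ρ σ u) '' S)}

/-- Broadcast time over the whole tree. -/
noncomputable def bTimeT (hG : G.IsTree) (w : V → V → ℝ) (ρ : ℝ) (u : V) : ℝ :=
  bTime G hG w ρ u Set.univ

/-- The set of broadcast centers. -/
def BCtr (hG : G.IsTree) (w : V → V → ℝ) (ρ : ℝ) : Set V :=
  {u | ∀ v, bTimeT G hG w ρ u ≤ bTimeT G hG w ρ v}

/-- A prime broadcast center. -/
def IsPrime (hG : G.IsTree) (w : V → V → ℝ) (ρ : ℝ) (κ : V) : Prop :=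
  κ ∈ BCtr G hG w ρ ∧
  ∀ u, G.Adj κ u → bTime G hG w ρ u (Bbr G u κ) ≤ bTime G hG w ρ κ (Bbr G κ u)

/-- Hop distance: number of edges on the unique path. -/
noncomputable def hop (hG : G.IsTree) (x y : V) : ℕ := (tPath G hG x y).length

/-- Total weight of the unique `x`-to-`y` path. -/
noncomputable def pw (hG : G.IsTree) (w : V → V → ℝ) (x y : V) : ℝ :=
  ((tPath G hG x y).darts.map (fun d => w d.toProd.1 d.toProd.2)).sum

/-- Symmetric weight function. -/
def Wsymm (w : V → V → ℝ) : Prop := ∀ a b, w a b = w b a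

/-- Positive weights on edges. -/
def Wpos (w : V → V → ℝ) : Prop := ∀ a b, G.Adj a b → 0 < w a b

/-- A scenario: a symmetric weight assignment within the uncertainty intervals. -/
def Scenario (lo hi : V → V → ℝ) (w : V → V → ℝ) : Prop :=
  (∀ a b, w a b = w b a) ∧ ∀ a b, G.Adj a b → lo a b ≤ w a b ∧ w a b ≤ hi a b

/-- The maximum regret of `x`. -/
noncomputable def maxRegret (hG : G.IsTree) (lo hi : V → V → ℝ) (ρ : ℝ) (x : V) : ℝ :=
  sSup {r | ∃ w y, Scenario G lo hi w ∧ r = bTimeT G hG w ρ x - bTimeT G hG w ρ y}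

/-- `w` is a worst-case scenario of the tree with respect to `x`. -/
def WorstCase (hG : G.IsTree) (lo hi : V → V → ℝ) (ρ : ℝ) (x : V) (w : V → V → ℝ) : Prop :=
  Scenario G lo hi w ∧
  ∃ y, bTimeT G hG w ρ x - bTimeT G hG w ρ y = maxRegret G hG lo hi ρ x

/-- An edge `(a,b)` lies on the unique `x`-to-`y` path. -/
def onPath (hG : G.IsTree) (x y a b : V) : Prop :=
  a ∈ (tPath G hG x y).support ∧ b ∈ (tPath G hG x y).support

/-- The base scenario `α_{x,y}`: weight `hi` on the `x`-to-`y` path and on edges of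
`B(y,x)`, weight `lo` elsewhere. -/
noncomputable def baseScenario (hG : G.IsTree) (lo hi : V → V → ℝ) (x y : V) : V → V → ℝ :=
  fun a b =>
    if onPath G hG x y a b ∨ (a ∈ Bbr G y x ∧ b ∈ Bbr G y x) then hi a b else lo a b

/-- The value `w(y,v) + b_time(v, B(v,y))` of a neighbor `v` of `y`. -/
noncomputable def nval (hG : G.IsTree) (w : V → V → ℝ) (ρ : ℝ) (y v : V) : ℝ :=
  w y v + bTime G hG w ρ v (Bbr G v y)

/-- Scenario `β^j_{x,y}`: agrees with `α_{x,y}`, except that every edge in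
`{(y,u_k)} ∪ E(B(u_k,y))` for `k > j` (with `u` the 1-based sorted enumeration
of the neighbors of `y` in `B(y,x)`) gets weight `lo`. -/
noncomputable def betaScenario (hG : G.IsTree) (lo hi : V → V → ℝ) (x y : V) {h : ℕ}
    (u : Fin h → V) (j : ℕ) : V → V → ℝ :=
  fun a b =>
    if ∃ k : Fin h, j < (k : ℕ) + 1 ∧
        ((a = y ∧ b = u k) ∨ (b = y ∧ a = u k) ∨
          (a ∈ Bbr G (u k) y ∧ b ∈ Bbr G (u k) y)) then
      lo a b
    else baseScenario G hG lo hi x y a b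

/-- Scenario `γ^j_{x,y}`: agrees with `α_{x,y}` on the edges in
`⋃_{1 ≤ k ≤ j} ({(y,u_k)} ∪ E(B(u_k,y)))` and with the scenario `s` elsewhere. -/
noncomputable def gammaScenario (hG : G.IsTree) (lo hi : V → V → ℝ) (s : V → V → ℝ)
    (x y : V) {h : ℕ} (u : Fin h → V) (j : ℕ) : V → V → ℝ :=
  fun a b =>
    if ∃ k : Fin h, (k : ℕ) + 1 ≤ j ∧
        ((a = y ∧ b = u k) ∨ (b = y ∧ a = u k) ∨
          (a ∈ Bbr G (u k) y ∧ b ∈ Bbr G (u k) y)) then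
      baseScenario G hG lo hi x y a b
    else s a b

/-- The set of neighbors of `y` inside the branch `B(y,x)`. -/
def nbrIn (x y : V) : Set V := {v | G.Adj y v ∧ v ∈ Bbr G y x}

end Postal

/-!
Every vertex other than `x` lies in exactly one branch `B(u_k, x)`, and on that branch a schedule
of `x` is a schedule of `u_k` delayed by `σ(u_k)·ρ + w(x, u_k)`.

Lower bound: the neighbors `u_0, …, u_k` get distinct slots `≥ 1`, so one of them, `u_l` with
`l ≤ k`, gets a slot `≥ k + 1`; its branch alone then takes at least
`(k + 1)·ρ + w(x, u_l) + b_time(u_l, B(u_l, x))`, which by the ordering is at least the `k`-th term.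

Upper bound: contacting `u_k` in slot `k + 1` and running an almost optimal schedule of each branch
inside it gives a valid schedule of `x` within `ε` of the maximum.
-/

namespace Postal

open Function

variable {V : Type*} {G : SimpleGraph V}

lemma notMem_Bbr {x s : V} (ha : G.Adj x s) : x ∉ Bbr G s x :=
  fun h => h ⟨.nil, by simpa using ha.ne.symm⟩

section Tree

variable (hG : G.IsTree)
include hG

lemma tPath_isPath (u v : V) : (tPath G hG u v).IsPath :=
  (hG.existsUnique_path u v).exists.choose_spec

lemma tPath_eq {u v : V} {p : G.Walk u v} (hp : p.IsPath) : tPath G hG u v = p :=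
  (hG.existsUnique_path u v).unique (tPath_isPath hG u v) hp

lemma tPath_self (u : V) : tPath G hG u u = .nil :=
  tPath_eq hG .nil

lemma tPath_of_adj {x s : V} (ha : G.Adj x s) : tPath G hG x s = .cons ha .nil :=
  tPath_eq hG (by simpa using ha.ne)

lemma support_tPath_subset {u v : V} (p : G.Walk u v) :
    (tPath G hG u v).support ⊆ p.support := by
  classical
  rw [tPath_eq hG p.bypass_isPath]
  exact p.support_bypass_subset_support

lemma mem_Bbr_iff {x y z : V} : z ∈ Bbr G y x ↔ y ∈ (tPath G hG x z).support :=
  ⟨fun hz => by_contra fun hy => hz ⟨_, hy⟩,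
    fun hy ⟨p, hp⟩ => hp (support_tPath_subset hG p hy)⟩

lemma mem_Bbr_self {x s : V} (ha : G.Adj x s) : s ∈ Bbr G s x := by
  simp [mem_Bbr_iff hG, tPath_of_adj hG ha]

lemma tPath_eq_cons {x s z : V} (ha : G.Adj x s) (hz : z ∈ Bbr G s x) :
    tPath G hG x z = .cons ha (tPath G hG s z) := by
  classical
  have hs := (mem_Bbr_iff hG).1 hz
  have hp := tPath_isPath hG x z
  have htake : (tPath G hG x z).takeUntil s hs = .cons ha .nil :=
    (tPath_eq hG (hp.takeUntil hs)).symm.trans (tPath_of_adj hG ha)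
  conv_lhs => rw [← (tPath G hG x z).take_spec hs]
  rw [htake, tPath_eq hG (hp.dropUntil hs)]
  rfl

lemma notMem_support_tPath_of_mem_Bbr {x s z : V} (ha : G.Adj x s) (hz : z ∈ Bbr G s x) :
    x ∉ (tPath G hG s z).support := by
  have hp := tPath_isPath hG x z
  rw [tPath_eq_cons hG ha hz, Walk.cons_isPath_iff] at hp
  exact hp.2

lemma support_tPath_subset_Bbr {x s z : V} (ha : G.Adj x s) (hz : z ∈ Bbr G s x) :
    ∀ ⦃t⦄, t ∈ (tPath G hG s z).support → t ∈ Bbr G s x := by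
  classical
  intro t ht
  have hx := notMem_support_tPath_of_mem_Bbr hG ha hz
  have hpath : (Walk.cons ha ((tPath G hG s z).takeUntil t ht)).IsPath :=
    (Walk.cons_isPath_iff _ _).2
      ⟨(tPath_isPath hG s z).takeUntil ht,
        fun h => hx (Walk.support_takeUntil_subset_support _ ht h)⟩
  rw [mem_Bbr_iff hG, tPath_eq hG hpath]
  simp

lemma getVert_one_tPath {x s z : V} (ha : G.Adj x s) (hz : z ∈ Bbr G s x) :
    (tPath G hG x z).getVert 1 = s := by
  rw [tPath_eq_cons hG ha hz, Walk.getVert_cons_succ, Walk.getVert_zero]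

lemma eq_of_mem_Bbr_of_mem_Bbr {x s t z : V} (hs : G.Adj x s) (ht : G.Adj x t)
    (hzs : z ∈ Bbr G s x) (hzt : z ∈ Bbr G t x) : s = t :=
  (getVert_one_tPath hG hs hzs).symm.trans (getVert_one_tPath hG ht hzt)

lemma exists_adj_mem_Bbr {x z : V} (hz : z ≠ x) : ∃ s, G.Adj x s ∧ z ∈ Bbr G s x := by
  obtain ⟨s, ha, q, hq⟩ := Walk.exists_eq_cons_of_ne hz.symm (tPath G hG x z)
  exact ⟨s, ha, (mem_Bbr_iff hG).2 (by simp [hq])⟩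

lemma parent_of_adj {x s : V} (ha : G.Adj x s) : parent G hG x s = x := by
  simp [parent, tPath_of_adj hG ha]

lemma parent_eq_of_mem_Bbr {x s z : V} (ha : G.Adj x s) (hz : z ∈ Bbr G s x) (hzs : z ≠ s) :
    parent G hG x z = parent G hG s z := by
  obtain ⟨m, hm⟩ := Nat.exists_eq_succ_of_ne_zero
    (mt Walk.eq_of_length_eq_zero hzs.symm : (tPath G hG s z).length ≠ 0)
  simp only [parent, tPath_eq_cons hG ha hz, Walk.length_cons, hm, Walk.getVert_cons_succ,
    Nat.succ_sub_one]

lemma parent_mem_Bbr {x s z : V} (ha : G.Adj x s) (hz : z ∈ Bbr G s x) :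
    parent G hG s z ∈ Bbr G s x :=
  support_tPath_subset_Bbr hG ha hz (Walk.getVert_mem_support _ _)

end Tree

section Schedules

variable (hG : G.IsTree) (w : V → V → ℝ) (ρ : ℝ)
include hG

lemma recvTime_self (σ : V → ℕ) (u : V) : recvTime G hG w ρ σ u u = 0 := by
  simp [recvTime, tPath_self hG]

lemma recvTime_eq_add_of_mem_Bbr (σ : V → ℕ) {x s z : V} (ha : G.Adj x s)
    (hz : z ∈ Bbr G s x) :
    recvTime G hG w ρ σ x z = σ s * ρ + w x s + recvTime G hG w ρ σ s z := by
  simp [recvTime, tPath_eq_cons hG ha hz, add_assoc]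

lemma recvTime_congr_of_mem_Bbr {σ σ' : V → ℕ} {x s z : V} (ha : G.Adj x s)
    (hz : z ∈ Bbr G s x) (hσ : Set.EqOn σ σ' (Bbr G s x \ {s})) :
    recvTime G hG w ρ σ s z = recvTime G hG w ρ σ' s z := by
  have hnodup := (tPath_isPath hG s z).support_nodup
  rw [← Walk.cons_tail_support, List.nodup_cons] at hnodup
  refine congrArg List.sum (List.map_congr_left fun d hd => ?_)
  have htail : d.toProd.2 ∈ (tPath G hG s z).support.tail := by
    rw [← Walk.map_snd_darts]
    exact List.mem_map_of_mem hd
  rw [hσ ⟨support_tPath_subset_Bbr hG ha hz (List.mem_of_mem_tail htail),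
    fun h => hnodup.1 (h ▸ htail)⟩]

lemma Valid.congr {σ σ' : V → ℕ} {u : V} {S : Set V} (hv : Valid G hG σ u S)
    (hσ : Set.EqOn σ σ' (S \ {u})) : Valid G hG σ' u S := by
  refine ⟨fun z hz hzu => hσ ⟨hz, hzu⟩ ▸ hv.1 z hz hzu,
    fun z₁ hz₁ z₂ hz₂ h₁ h₂ hne hpar => ?_⟩
  rw [← hσ ⟨hz₁, h₁⟩, ← hσ ⟨hz₂, h₂⟩]
  exact hv.2 z₁ hz₁ z₂ hz₂ h₁ h₂ hne hpar

lemma Valid.restrict_Bbr {σ : V → ℕ} {x s : V} (hv : Valid G hG σ x Set.univ)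
    (ha : G.Adj x s) : Valid G hG σ s (Bbr G s x) := by
  have hne {z} (hz : z ∈ Bbr G s x) : z ≠ x := fun h => notMem_Bbr ha (h ▸ hz)
  refine ⟨fun z hz _ => hv.1 z trivial (hne hz), fun z₁ hz₁ z₂ hz₂ h₁ h₂ hz hpar => ?_⟩
  refine hv.2 z₁ trivial z₂ trivial (hne hz₁) (hne hz₂) hz ?_
  rw [parent_eq_of_mem_Bbr hG ha hz₁ h₁, parent_eq_of_mem_Bbr hG ha hz₂ h₂, hpar]

lemma valid_univ_of_Bbr {σ : V → ℕ} {x : V}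
    (hbranch : ∀ s, G.Adj x s → Valid G hG σ s (Bbr G s x))
    (hslot : ∀ s, G.Adj x s → 1 ≤ σ s)
    (hinj : ∀ s, G.Adj x s → ∀ t, G.Adj x t → s ≠ t → σ s ≠ σ t) :
    Valid G hG σ x Set.univ := by
  refine ⟨fun z _ hzx => ?_, fun z₁ _ z₂ _ h₁ h₂ hz hpar => ?_⟩
  · obtain ⟨s, ha, hz⟩ := exists_adj_mem_Bbr hG hzx
    obtain rfl | hzs := eq_or_ne z s
    · exact hslot z ha
    · exact (hbranch s ha).1 z hz hzs
  obtain ⟨s₁, ha₁, hz₁⟩ := exists_adj_mem_Bbr hG h₁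
  obtain ⟨s₂, ha₂, hz₂⟩ := exists_adj_mem_Bbr hG h₂
  -- The parent of a vertex of `B(s, x)` is `x` for `s` itself and lies in `B(s, x) ∌ x` otherwise.
  have hparent {z s} (ha : G.Adj x s) (hz : z ∈ Bbr G s x) (hzs : z ≠ s) :
      parent G hG x z ∈ Bbr G s x :=
    parent_eq_of_mem_Bbr hG ha hz hzs ▸ parent_mem_Bbr hG ha hz
  obtain rfl | hzs₁ := eq_or_ne z₁ s₁ <;> obtain rfl | hzs₂ := eq_or_ne z₂ s₂
  · exact hinj z₁ ha₁ z₂ ha₂ hz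
  · have hx := hparent ha₂ hz₂ hzs₂
    rw [← hpar, parent_of_adj hG ha₁] at hx
    exact absurd hx (notMem_Bbr ha₂)
  · have hx := hparent ha₁ hz₁ hzs₁
    rw [hpar, parent_of_adj hG ha₂] at hx
    exact absurd hx (notMem_Bbr ha₁)
  · obtain rfl := eq_of_mem_Bbr_of_mem_Bbr hG ha₁ ha₂ (hparent ha₁ hz₁ hzs₁)
      (hpar ▸ hparent ha₂ hz₂ hzs₂)
    refine (hbranch s₁ ha₁).2 z₁ hz₁ z₂ hz₂ hzs₁ hzs₂ hz ?_
    rwa [← parent_eq_of_mem_Bbr hG ha₁ hz₁ hzs₁, ← parent_eq_of_mem_Bbr hG ha₁ hz₂ hzs₂]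

end Schedules

variable (G) in
noncomputable def makespan (hG : G.IsTree) (w : V → V → ℝ) (ρ : ℝ) (σ : V → ℕ) (u : V)
    (S : Set V) : ℝ :=
  sSup (recvTime G hG w ρ σ u '' S)

section Makespan

variable (hG : G.IsTree) (w : V → V → ℝ) (ρ : ℝ)
include hG

lemma makespan_le {σ : V → ℕ} {u : V} {S : Set V} {M : ℝ} (hS : S.Nonempty)
    (hM : ∀ z ∈ S, recvTime G hG w ρ σ u z ≤ M) : makespan G hG w ρ σ u S ≤ M :=
  csSup_le (hS.image _) (Set.forall_mem_image.2 hM)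

variable [Fintype V]

lemma recvTime_le_makespan {σ : V → ℕ} {u z : V} {S : Set V} (hz : z ∈ S) :
    recvTime G hG w ρ σ u z ≤ makespan G hG w ρ σ u S :=
  le_csSup (Set.toFinite _).bddAbove ⟨z, hz, rfl⟩

lemma makespan_nonneg (σ : V → ℕ) {u : V} {S : Set V} (hu : u ∈ S) :
    0 ≤ makespan G hG w ρ σ u S :=
  recvTime_self hG w ρ σ u ▸ recvTime_le_makespan hG w ρ hu

lemma valid_succ_equivFin (u : V) (S : Set V) :
    Valid G hG (fun z => Fintype.equivFin V z + 1) u S :=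
  ⟨fun _ _ _ => Nat.le_add_left 1 _, fun _ _ _ _ _ _ hne _ h =>
    hne ((Fintype.equivFin V).injective (Fin.val_injective (Nat.add_right_cancel h)))⟩

lemma bTime_le_makespan {σ : V → ℕ} {u : V} {S : Set V} (hu : u ∈ S)
    (hv : Valid G hG σ u S) : bTime G hG w ρ u S ≤ makespan G hG w ρ σ u S :=
  csInf_le ⟨0, fun _ ⟨σ, _, hm⟩ => hm ▸ makespan_nonneg hG w ρ σ hu⟩ ⟨σ, hv, rfl⟩

lemma le_bTime {u : V} {S : Set V} {M : ℝ}
    (hM : ∀ σ, Valid G hG σ u S → M ≤ makespan G hG w ρ σ u S) : M ≤ bTime G hG w ρ u S :=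
  le_csInf ⟨_, _, valid_succ_equivFin hG u S, rfl⟩ fun _ ⟨σ, hv, hm⟩ => hm ▸ hM σ hv

lemma bTime_nonneg {u : V} {S : Set V} (hu : u ∈ S) : 0 ≤ bTime G hG w ρ u S :=
  le_bTime hG w ρ fun σ _ => makespan_nonneg hG w ρ σ hu

lemma exists_makespan_lt_bTime_add {u : V} {S : Set V} {ε : ℝ} (hε : 0 < ε) :
    ∃ σ, Valid G hG σ u S ∧ makespan G hG w ρ σ u S < bTime G hG w ρ u S + ε := by
  obtain ⟨_, ⟨σ, hv, rfl⟩, hlt⟩ := exists_lt_of_csInf_lt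
    (⟨_, _, valid_succ_equivFin hG u S, rfl⟩ : Set.Nonempty {m | ∃ σ, Valid G hG σ u S ∧
      m = makespan G hG w ρ σ u S})
    (lt_add_of_pos_right (bTime G hG w ρ u S) hε)
  exact ⟨σ, hv, hlt⟩

lemma add_makespan_Bbr_le (σ : V → ℕ) {x s : V} (ha : G.Adj x s) :
    σ s * ρ + w x s + makespan G hG w ρ σ s (Bbr G s x) ≤ makespan G hG w ρ σ x Set.univ := by
  rw [← le_sub_iff_add_le']
  refine makespan_le hG w ρ ⟨s, mem_Bbr_self hG ha⟩ fun z hz => ?_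
  rw [le_sub_iff_add_le', ← recvTime_eq_add_of_mem_Bbr hG w ρ σ ha hz]
  exact recvTime_le_makespan hG w ρ trivial

end Makespan

lemma exists_le_and_succ_le_of_injective {n : ℕ} {f : Fin n → ℕ} (hf : Injective f)
    (hpos : ∀ i, 1 ≤ f i) (k : Fin n) : ∃ l ≤ k, (k : ℕ) + 1 ≤ f l := by
  by_contra! hlt
  have hmaps : Set.MapsTo f (Finset.Iic k) (Finset.Icc 1 (k : ℕ)) := fun l hl => by
    have := hlt l (Finset.mem_Iic.1 hl)
    simp only [Finset.coe_Icc, Set.mem_Icc]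
    exact ⟨hpos l, by omega⟩
  have := Finset.card_le_card_of_injOn f hmaps hf.injOn
  simp only [Fin.card_Iic, Nat.card_Icc] at this
  omega

section Neighbors

variable (hG : G.IsTree) {x : V} {n : ℕ} {u : Fin n → V}
include hG

lemma exists_glued_schedule (hadj : ∀ k, G.Adj x (u k)) (hinj : Injective u)
    (slot : Fin n → ℕ) (τ : Fin n → V → ℕ) :
    ∃ σ : V → ℕ, ∀ k, σ (u k) = slot k ∧ Set.EqOn σ (τ k) (Bbr G (u k) x \ {u k}) := by
  have hunique {k l z} (hk : z ∈ Bbr G (u k) x) (hl : z ∈ Bbr G (u l) x) : k = l :=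
    hinj (eq_of_mem_Bbr_of_mem_Bbr hG (hadj k) (hadj l) hk hl)
  classical
  let σ z := if hz : ∃ k, z ∈ Bbr G (u k) x then
    update (τ hz.choose) (u hz.choose) (slot hz.choose) z else 0
  have hσ {k z} (hz : z ∈ Bbr G (u k) x) : σ z = update (τ k) (u k) (slot k) z := by
    have hex : ∃ k, z ∈ Bbr G (u k) x := ⟨k, hz⟩
    simp only [σ, dif_pos hex, hunique hex.choose_spec hz]
  refine ⟨σ, fun k => ⟨?_, fun z ⟨hz, hzu⟩ => ?_⟩⟩
  · rw [hσ (mem_Bbr_self hG (hadj k)), update_self]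
  · rw [hσ hz, update_of_ne hzu]

lemma exists_valid_glued_schedule (hinj : Injective u) (hrange : Set.range u = {v | G.Adj x v})
    {τ : Fin n → V → ℕ} (hτ : ∀ k, Valid G hG (τ k) (u k) (Bbr G (u k) x)) :
    ∃ σ : V → ℕ, Valid G hG σ x Set.univ ∧
      ∀ k, σ (u k) = k + 1 ∧ Set.EqOn σ (τ k) (Bbr G (u k) x \ {u k}) := by
  obtain ⟨σ, hσ⟩ := exists_glued_schedule hG (fun k => hrange.subset ⟨k, rfl⟩) hinj (· + 1) τ
  have hnbr {P : V → Prop} (hP : ∀ k, P (u k)) (s : V) (hs : G.Adj x s) : P s := by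
    obtain ⟨k, rfl⟩ := hrange.symm.subset hs
    exact hP k
  refine ⟨σ, valid_univ_of_Bbr hG (hnbr fun k => (hτ k).congr hG (hσ k).2.symm)
    (hnbr fun k => (hσ k).1 ▸ Nat.le_add_left 1 k) (hnbr fun k => hnbr fun l hkl => ?_), hσ⟩
  rw [(hσ k).1, (hσ l).1]
  exact fun h => hkl (congrArg u (Fin.ext (Nat.add_right_cancel h)))

variable [Fintype V] (w : V → V → ℝ) (ρ : ℝ)

lemma sSup_le_bTimeT (hρ : 0 ≤ ρ) (hadj : ∀ k, G.Adj x (u k)) (hinj : Injective u)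
    (hsorted : ∀ k l : Fin n, k ≤ l → nval G hG w ρ x (u l) ≤ nval G hG w ρ x (u k)) :
    sSup (Set.range fun k : Fin n =>
        ((k : ℕ) + 1 : ℝ) * ρ + w x (u k) + bTime G hG w ρ (u k) (Bbr G (u k) x))
      ≤ bTimeT G hG w ρ x := by
  refine le_bTime hG w ρ fun σ hv => Real.sSup_le ?_ (makespan_nonneg hG w ρ σ trivial)
  rintro _ ⟨k, rfl⟩
  have hslot_inj : Injective fun i => σ (u i) := fun i j hij => hinj <| by_contra fun hne =>
    hv.2 _ trivial _ trivial (hadj i).ne.symm (hadj j).ne.symm hne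
      ((parent_of_adj hG (hadj i)).trans (parent_of_adj hG (hadj j)).symm) hij
  obtain ⟨l, hlk, hslot⟩ := exists_le_and_succ_le_of_injective hslot_inj
    (fun i => hv.1 _ trivial (hadj i).ne.symm) k
  have hslot' : ((k : ℕ) + 1 : ℝ) ≤ σ (u l) := by exact_mod_cast hslot
  calc ((k : ℕ) + 1 : ℝ) * ρ + w x (u k) + bTime G hG w ρ (u k) (Bbr G (u k) x)
      ≤ σ (u l) * ρ + w x (u l) + bTime G hG w ρ (u l) (Bbr G (u l) x) := by
        have hval := hsorted l k hlk
        have hdelay := mul_le_mul_of_nonneg_right hslot' hρ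
        unfold nval at hval
        linarith
    _ ≤ σ (u l) * ρ + w x (u l) + makespan G hG w ρ σ (u l) (Bbr G (u l) x) := by
        gcongr
        exact bTime_le_makespan hG w ρ (mem_Bbr_self hG (hadj l)) (hv.restrict_Bbr hG (hadj l))
    _ ≤ makespan G hG w ρ σ x Set.univ := add_makespan_Bbr_le hG w ρ σ (hadj l)

lemma bTimeT_le_sSup (hpos : Wpos G w) (hρ : 0 ≤ ρ) (hinj : Injective u)
    (hrange : Set.range u = {v | G.Adj x v}) :
    bTimeT G hG w ρ x ≤ sSup (Set.range fun k : Fin n =>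
        ((k : ℕ) + 1 : ℝ) * ρ + w x (u k) + bTime G hG w ρ (u k) (Bbr G (u k) x)) := by
  set F := fun k : Fin n =>
    ((k : ℕ) + 1 : ℝ) * ρ + w x (u k) + bTime G hG w ρ (u k) (Bbr G (u k) x)
  have hadj (k : Fin n) : G.Adj x (u k) := hrange.subset ⟨k, rfl⟩
  have hF (k : Fin n) : F k ≤ sSup (Set.range F) :=
    le_csSup (Set.finite_range F).bddAbove ⟨k, rfl⟩
  -- needed because the source itself is reached at time `0`
  have hF_nonneg : 0 ≤ sSup (Set.range F) := Real.sSup_nonneg <| Set.forall_mem_range.2 fun k => by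
    have := hpos _ _ (hadj k)
    have := bTime_nonneg hG w ρ (mem_Bbr_self hG (hadj k))
    positivity
  refine le_of_forall_pos_le_add fun ε hε => ?_
  choose τ hτ hτ_lt using fun k =>
    exists_makespan_lt_bTime_add hG w ρ (S := Bbr G (u k) x) (u := u k) hε
  obtain ⟨σ, hv, hσ⟩ := exists_valid_glued_schedule hG hinj hrange hτ
  refine (bTime_le_makespan hG w ρ (Set.mem_univ x) hv).trans <|
    makespan_le hG w ρ ⟨x, trivial⟩ fun z _ => ?_
  obtain rfl | hzx := eq_or_ne z x
  · rw [recvTime_self]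
    linarith
  obtain ⟨_, ha, hz⟩ := exists_adj_mem_Bbr hG hzx
  obtain ⟨k, rfl⟩ := hrange.symm.subset ha
  have hrecv := recvTime_le_makespan hG w ρ (σ := τ k) (u := u k) hz
  rw [recvTime_eq_add_of_mem_Bbr hG w ρ σ ha hz, (hσ k).1,
    recvTime_congr_of_mem_Bbr hG w ρ ha hz (hσ k).2]
  have := hτ_lt k
  have := hF k
  push_cast
  linarith

end Neighbors

theorem stmt7_general {V : Type*} [Fintype V] (G : SimpleGraph V) (hG : G.IsTree)
    (w : V → V → ℝ) (hpos : Wpos G w) (ρ : ℝ) (hρ : 0 < ρ)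
    (x : V) (h : ℕ) (u : Fin h → V) (hinj : Function.Injective u)
    (hrange : Set.range u = {v | G.Adj x v})
    (hsorted : ∀ k l : Fin h, k ≤ l →
      w x (u l) + bTime G hG w ρ (u l) (Bbr G (u l) x)
        ≤ w x (u k) + bTime G hG w ρ (u k) (Bbr G (u k) x)) :
    bTimeT G hG w ρ x
      = sSup (Set.range fun k : Fin h =>
          ((k : ℕ) + 1 : ℝ) * ρ + w x (u k) + bTime G hG w ρ (u k) (Bbr G (u k) x)) :=
  le_antisymm (bTimeT_le_sSup hG w ρ hpos hρ.le hinj hrange)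
    (sSup_le_bTimeT hG w ρ hρ.le (fun k => hrange.subset ⟨k, rfl⟩) hinj hsorted)

/-- If the neighbors `u_1, …, u_h` of `x` are ordered so that
`w(x,u_k) + b_time(u_k, B(u_k,x))` is nonincreasing in `k`, then that contact
order is optimal and
`b_time(x,T) = max_{1 ≤ k ≤ h} (k·ρ + w(x,u_k) + b_time(u_k, B(u_k,x)))`. -/
theorem stmt7 {V : Type*} [Fintype V] [DecidableEq V] (G : SimpleGraph V) (hG : G.IsTree)
    (w : V → V → ℝ) (hsym : Wsymm w) (hpos : Wpos G w) (ρ : ℝ) (hρ : 0 < ρ)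
    (x : V) (h : ℕ) (u : Fin h → V) (hinj : Function.Injective u)
    (hrange : Set.range u = {v | G.Adj x v})
    (hsorted : ∀ k l : Fin h, k ≤ l →
      w x (u l) + bTime G hG w ρ (u l) (Bbr G (u l) x)
        ≤ w x (u k) + bTime G hG w ρ (u k) (Bbr G (u k) x)) :
    bTimeT G hG w ρ x
      = sSup (Set.range fun k : Fin h =>
          ((k : ℕ) + 1 : ℝ) * ρ + w x (u k) + bTime G hG w ρ (u k) (Bbr G (u k) x)) :=
  stmt7_general G hG w hpos ρ hρ x h u hinj hrange hsorted

end Postal
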